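/- Let (μₙ), (pₙ), (Eₙ) be sequences of reals with μₙ + pₙ > 0, μₙ + 3pₙ ≥ 0, μₙ ≥ 0, denominators −(1/3)μₙ − pₙ + Eₙ ≠ 0, and suppose the ratio rₙ = ((2/3)μₙ + Eₙ)/(−(1/3)μₙ − pₙ + Eₙ) → 1, while (μₙ + 3pₙ)/(μₙ + pₙ) remains bounded. Then |Eₙ|/(μₙ + pₙ) → ∞. -/

import Mathlib

/-!
Subtracting 1 from the slope leaves `(μ + p)/d` with `d = -(1/3)μ - p + E`, so the slope tending
to 1 forces `|d|/(μ + p) → ∞`. Since `E = d + (μ + 3p)/3` and `(μ + 3p)/(μ + p)` is bounded,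
`|E|/(μ + p)` differs from `|d|/(μ + p)` by a bounded amount and diverges as well.
-/

open Filter Topology

variable {α : Type*} {l : Filter α}

lemma Filter.Tendsto.abs_inv_atTop {f : α → ℝ} (h : Tendsto f l (𝓝 0))
    (hf : ∀ᶠ x in l, f x ≠ 0) : Tendsto (fun x => |f x|⁻¹) l atTop :=
  tendsto_inv_nhdsGT_zero.comp <| tendsto_nhdsWithin_of_tendsto_nhds_of_eventually_within _
    (by simpa using h.abs) (hf.mono fun _ => abs_pos.mpr)

lemma Filter.Tendsto.abs_add_atTop_of_abs_le {u v : α → ℝ} {M : ℝ}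
    (hu : Tendsto (fun x => |u x|) l atTop) (hv : ∀ᶠ x in l, |v x| ≤ M) :
    Tendsto (fun x => |u x + v x|) l atTop := by
  refine tendsto_atTop_mono' l (hv.mono fun x hvx => ?_) (tendsto_atTop_add_const_right l (-M) hu)
  have := abs_sub (u x + v x) (v x)
  rw [add_sub_cancel_right] at this
  linarith

lemma slope_sub_one {μ p E : ℝ} (hd : -(1 / 3) * μ - p + E ≠ 0) :
    ((2 / 3) * μ + E) / (-(1 / 3) * μ - p + E) - 1 = (μ + p) / (-(1 / 3) * μ - p + E) := by
  rw [div_sub_one hd]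
  ring_nf

theorem stmt_5_general (μ p E : ℕ → ℝ)
    (hμp : ∀ n, μ n + p n > 0)
    (hd : ∀ n, -(1 / 3) * μ n - p n + E n ≠ 0)
    (hr : Tendsto (fun n => ((2 / 3) * μ n + E n) / (-(1 / 3) * μ n - p n + E n))
      atTop (nhds 1))
    (hbdd : ∃ M : ℝ, ∀ n, |(μ n + 3 * p n) / (μ n + p n)| ≤ M) :
    Tendsto (fun n => |E n| / (μ n + p n)) atTop atTop := by
  obtain ⟨M, hM⟩ := hbdd
  set d := fun n => -(1 / 3) * μ n - p n + E n
  have hsd : Tendsto (fun n => (μ n + p n) / d n) atTop (𝓝 0) := by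
    have h := (hr.sub_const 1).congr fun n => slope_sub_one (hd n)
    rwa [sub_self] at h
  have hds : Tendsto (fun n => |d n / (μ n + p n)|) atTop atTop := by
    refine (hsd.abs_inv_atTop (.of_forall fun n => div_ne_zero (hμp n).ne' (hd n))).congr
      fun n => ?_
    rw [← abs_inv, inv_div]
  refine (hds.abs_add_atTop_of_abs_le (v := fun n => (μ n + 3 * p n) / (μ n + p n) / 3)
    (M := M / 3) (.of_forall fun n => ?_)).congr fun n => ?_
  · rw [abs_div, abs_of_pos (three_pos : (0 : ℝ) < 3)]
    linarith [hM n]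
  · have hE : d n / (μ n + p n) + (μ n + 3 * p n) / (μ n + p n) / 3 = E n / (μ n + p n) := by
      field_simp
      ring
    rw [hE, abs_div, abs_of_pos (hμp n)]

/-- Limiting-sequence form of Proposition 4: if the apparent-horizon slopes tend
to 1 while `(μ + 3p)/(μ + p)` stays bounded, then `|E|/(μ + p)` diverges. -/
theorem stmt_5 (μ p E : ℕ → ℝ)
    (hμp : ∀ n, μ n + p n > 0) (hsec : ∀ n, μ n + 3 * p n ≥ 0) (hμ : ∀ n, μ n ≥ 0)
    (hd : ∀ n, -(1 / 3) * μ n - p n + E n ≠ 0)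
    (hr : Tendsto (fun n => ((2 / 3) * μ n + E n) / (-(1 / 3) * μ n - p n + E n))
      atTop (nhds 1))
    (hbdd : ∃ M : ℝ, ∀ n, |(μ n + 3 * p n) / (μ n + p n)| ≤ M) :
    Tendsto (fun n => |E n| / (μ n + p n)) atTop atTop :=
  stmt_5_general μ p E hμp hd hr hbdd
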